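/- If a mechanism M satisfies (α, ρ)-Rényi differential privacy for some α > 1, then for any 0 < δ < 1, M satisfies (ε, δ)-differential privacy with ε = ρ + log((α−1)/α) − (log δ + log α)/(α − 1). -/

import Mathlib

open scoped ENNReal

/-- Rényi divergence of order `α` between two discrete distributions:
`D_α(P‖Q) = (1/(α−1)) log ∑ₓ P(x)^α Q(x)^{1−α}` (valued in `EReal`). -/
noncomputable def renyiDiv {O : Type*} (α : ℝ) (P Q : PMF O) : EReal :=
  (((α - 1)⁻¹ : ℝ) : EReal) * ENNReal.log (∑' x, P x ^ α * Q x ^ (1 - α))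

/-- `(α, ρ)`-Rényi differential privacy. -/
def IsRDP {D O : Type*} (neighbor : D → D → Prop) (M : D → PMF O) (α ρ : ℝ) : Prop :=
  ∀ d d', neighbor d d' → renyiDiv α (M d) (M d') ≤ (ρ : EReal)

/-- `(ε, δ)`-differential privacy for discrete mechanisms. -/
def IsDP {D O : Type*} (neighbor : D → D → Prop) (M : D → PMF O) (ε δ : ℝ) : Prop :=
  ∀ d d', neighbor d d' → ∀ S : Set O,
    (M d).toOuterMeasure S ≤
      ENNReal.ofReal (Real.exp ε) * (M d').toOuterMeasure S + ENNReal.ofReal δ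

/-! Writing `P(S) = ∑_{x ∈ S} (P x · Q x ^ ((1 - α) / α)) · Q x ^ ((α - 1) / α)`, Hölder's
inequality with exponents `α` and `α / (α - 1)` gives `P(S) ≤ T ^ (1 / α) · Q(S) ^ ((α - 1) / α)`,
where `T = ∑ P ^ α Q ^ (1 - α) ≤ exp ((α - 1) ρ)` by the RDP bound. Young's inequality, weighted so
that its constant term is `δ`, then bounds the concave function `Q(S) ↦ Q(S) ^ ((α - 1) / α)` by a
linear one, whose slope is `exp ε`. -/

namespace ENNReal

theorem tsum_mul_le_tsum_rpow_mul_tsum_rpow {ι : Type*} (f g : ι → ℝ≥0∞) {p q : ℝ}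
    (hpq : p.HolderConjugate q) :
    ∑' i, f i * g i ≤ (∑' i, f i ^ p) ^ (1 / p) * (∑' i, g i ^ q) ^ (1 / q) := by
  let _ : MeasurableSpace ι := ⊤
  simpa only [MeasureTheory.lintegral_count, Pi.mul_apply] using
    lintegral_mul_le_Lp_mul_Lq MeasureTheory.Measure.count hpq
      (measurable_from_top (f := f)).aemeasurable (measurable_from_top (f := g)).aemeasurable

end ENNReal

namespace PMF

variable {O : Type*}

theorem apply_eq_zero_of_tsum_rpow_mul_rpow_ne_top {α : ℝ} (hα : 1 < α) {P Q : PMF O}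
    (hT : ∑' x, P x ^ α * Q x ^ (1 - α) ≠ ⊤) {x : O} (hQx : Q x = 0) : P x = 0 := by
  by_contra hPx
  refine hT (ENNReal.tsum_eq_top_of_eq_top ⟨x, ?_⟩)
  rw [hQx, ENNReal.zero_rpow_of_neg (by linarith)]
  exact ENNReal.mul_top (by simp [ENNReal.rpow_eq_zero_iff, hPx, P.apply_ne_top x])

theorem toOuterMeasure_le_tsum_rpow_mul_rpow {α β : ℝ} (hαβ : α.HolderConjugate β)
    {P Q : PMF O} (hT : ∑' x, P x ^ α * Q x ^ (1 - α) ≠ ⊤) (S : Set O) :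
    P.toOuterMeasure S ≤
      (∑' x, P x ^ α * Q x ^ (1 - α)) ^ (1 / α) * Q.toOuterMeasure S ^ (1 / β) := by
  have hα := hαβ.lt
  have hexp : (1 - α) / α + 1 / β = 0 := by
    rw [sub_div, div_self hαβ.ne_zero, one_div, one_div]
    linarith [hαβ.inv_add_inv_eq_one]
  set f := S.indicator fun x ↦ P x * Q x ^ ((1 - α) / α)
  set g := S.indicator fun x ↦ Q x ^ (1 / β)
  have hfg : ∀ x, f x * g x = S.indicator P x := by
    intro x
    by_cases hxS : x ∈ S
    · simp only [f, g, Set.indicator_of_mem hxS, mul_assoc]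
      by_cases hQx : Q x = 0
      · simp [apply_eq_zero_of_tsum_rpow_mul_rpow_ne_top hα hT hQx]
      rw [← ENNReal.rpow_add _ _ hQx (Q.apply_ne_top x), hexp, ENNReal.rpow_zero, mul_one]
    · simp [f, g, hxS]
  have hf : ∀ x, f x ^ α ≤ P x ^ α * Q x ^ (1 - α) := by
    intro x
    by_cases hxS : x ∈ S
    · simp only [f, Set.indicator_of_mem hxS]
      rw [ENNReal.mul_rpow_of_nonneg _ _ hαβ.nonneg, ← ENNReal.rpow_mul,
        div_mul_cancel₀ _ hαβ.ne_zero]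
    · simp [f, hxS, ENNReal.zero_rpow_of_pos hαβ.pos]
  have hg : ∀ x, g x ^ β = S.indicator Q x := by
    intro x
    by_cases hxS : x ∈ S
    · simp [g, hxS, ← ENNReal.rpow_mul, hαβ.symm.ne_zero]
    · simp [g, hxS, ENNReal.zero_rpow_of_pos hαβ.symm.pos]
  calc P.toOuterMeasure S = ∑' x, f x * g x := by simp only [hfg, toOuterMeasure_apply]
    _ ≤ (∑' x, f x ^ α) ^ (1 / α) * (∑' x, g x ^ β) ^ (1 / β) :=
      ENNReal.tsum_mul_le_tsum_rpow_mul_tsum_rpow f g hαβ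
    _ ≤ _ := by
      rw [tsum_congr hg, ← toOuterMeasure_apply]
      gcongr with x
      exact hf x

end PMF

theorem renyiDiv_le_iff {O : Type*} {α ρ : ℝ} (hα : 1 < α) {P Q : PMF O} :
    renyiDiv α P Q ≤ ρ ↔
      ∑' x, P x ^ α * Q x ^ (1 - α) ≤ ENNReal.ofReal (Real.exp ((α - 1) * ρ)) := by
  have hα1 : (0 : EReal) < ((α - 1 : ℝ) : EReal) := EReal.coe_pos.2 (by linarith)
  rw [renyiDiv, EReal.coe_inv, ← EReal.div_eq_inv_mul,
    EReal.div_le_iff_le_mul hα1 (EReal.coe_ne_top _), ← EReal.coe_mul,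
    ← EReal.exp_le_exp_iff, ENNReal.exp_log, EReal.exp_coe]

namespace Real

theorem rpow_one_div_mul_rpow_one_div_le {α β C δ x : ℝ} (hαβ : α.HolderConjugate β)
    (hC : 0 ≤ C) (hδ : 0 < δ) (hx : 0 ≤ x) :
    C ^ (1 / α) * x ^ (1 / β) ≤ (C / (α * δ)) ^ (β / α) / β * x + δ := by
  have hαδ : 0 < α * δ := mul_pos hαβ.pos hδ
  have hCδ : 0 ≤ C / (α * δ) := div_nonneg hC hαδ.le
  -- Split `C ^ (1 / α) * x ^ (1 / β) = a * b` so that Young's constant term `b ^ α / α` is `δ`.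
  have hsplit : C ^ (1 / α) * x ^ (1 / β) =
      ((C / (α * δ)) ^ (1 / α) * x ^ (1 / β)) * (α * δ) ^ (1 / α) := by
    rw [mul_right_comm, ← mul_rpow hCδ hαδ.le, div_mul_cancel₀ _ hαδ.ne']
  have hb : ((α * δ) ^ (1 / α)) ^ α / α = δ := by
    rw [← rpow_mul hαδ.le, one_div_mul_cancel hαβ.ne_zero, rpow_one,
      mul_div_cancel_left₀ _ hαβ.ne_zero]
  have ha : ((C / (α * δ)) ^ (1 / α) * x ^ (1 / β)) ^ β = (C / (α * δ)) ^ (β / α) * x := by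
    rw [mul_rpow (by positivity) (by positivity), ← rpow_mul hCδ, ← rpow_mul hx,
      one_div_mul_cancel hαβ.symm.ne_zero, rpow_one, one_div_mul_eq_div]
  calc C ^ (1 / α) * x ^ (1 / β)
      ≤ ((C / (α * δ)) ^ (1 / α) * x ^ (1 / β)) ^ β / β + ((α * δ) ^ (1 / α)) ^ α / α := by
        rw [hsplit]
        exact young_inequality_of_nonneg (by positivity) (by positivity) hαβ.symm
    _ = (C / (α * δ)) ^ (β / α) / β * x + δ := by rw [ha, hb, div_mul_eq_mul_div]

theorem exp_add_log_sub_div_eq {α ρ δ : ℝ} (hα : 1 < α) (hδ : 0 < δ) :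
    exp (ρ + log ((α - 1) / α) - (log δ + log α) / (α - 1)) =
      (exp ((α - 1) * ρ) / (α * δ)) ^ (α / (α - 1) / α) / (α / (α - 1)) := by
  have hα0 : 0 < α := by linarith
  have hα1 : 0 < α - 1 := by linarith
  have hβ : 0 < α / (α - 1) := div_pos hα0 hα1
  have hbase : 0 < exp ((α - 1) * ρ) / (α * δ) := by positivity
  rw [eq_comm, ← exp_log (div_pos (rpow_pos_of_pos hbase _) hβ)]
  congr 1
  rw [log_div (rpow_pos_of_pos hbase _).ne' hβ.ne', log_rpow hbase,
    log_div (by positivity) (by positivity), log_exp, log_mul hα0.ne' hδ.ne',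
    log_div hα0.ne' hα1.ne', log_div hα1.ne' hα0.ne']
  field_simp
  ring

end Real

theorem ENNReal.ofReal_rpow_one_div_mul_rpow_one_div_le {α β C δ : ℝ}
    (hαβ : α.HolderConjugate β) (hC : 0 ≤ C) (hδ : 0 < δ) {y : ℝ≥0∞} (hy : y ≠ ⊤) :
    ENNReal.ofReal C ^ (1 / α) * y ^ (1 / β) ≤
      ENNReal.ofReal ((C / (α * δ)) ^ (β / α) / β) * y + ENNReal.ofReal δ := by
  have hα := hαβ.pos
  have hβ := hαβ.symm.pos
  rw [← ENNReal.ofReal_toReal hy, ENNReal.ofReal_rpow_of_nonneg hC (by positivity),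
    ENNReal.ofReal_rpow_of_nonneg ENNReal.toReal_nonneg (by positivity),
    ← ENNReal.ofReal_mul (by positivity), ← ENNReal.ofReal_mul (by positivity),
    ← ENNReal.ofReal_add (by positivity) hδ.le]
  exact ENNReal.ofReal_le_ofReal
    (Real.rpow_one_div_mul_rpow_one_div_le hαβ hC hδ ENNReal.toReal_nonneg)

theorem RDP_to_DP_general {D O : Type*} (neighbor : D → D → Prop) (M : D → PMF O)
    (α ρ δ : ℝ) (hα : 1 < α) (hδ0 : 0 < δ)
    (hM : IsRDP neighbor M α ρ) :
    IsDP neighbor M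
      (ρ + Real.log ((α - 1) / α) - (Real.log δ + Real.log α) / (α - 1)) δ := by
  intro d d' hdd' S
  have hαβ : α.HolderConjugate (α / (α - 1)) := .conjExponent hα
  have hT := (renyiDiv_le_iff hα).1 (hM d d' hdd')
  have hQS : (M d').toOuterMeasure S ≠ ⊤ :=
    (M d').toOuterMeasure_apply S ▸ (M d').tsum_coe_indicator_ne_top S
  rw [Real.exp_add_log_sub_div_eq hα hδ0]
  calc (M d).toOuterMeasure S
      ≤ (∑' x, M d x ^ α * M d' x ^ (1 - α)) ^ (1 / α) *
          (M d').toOuterMeasure S ^ (1 / (α / (α - 1))) :=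
        (M d).toOuterMeasure_le_tsum_rpow_mul_rpow hαβ
          (ne_top_of_le_ne_top ENNReal.ofReal_ne_top hT) S
    _ ≤ ENNReal.ofReal (Real.exp ((α - 1) * ρ)) ^ (1 / α) *
          (M d').toOuterMeasure S ^ (1 / (α / (α - 1))) := by
        gcongr
    _ ≤ _ :=
        ENNReal.ofReal_rpow_one_div_mul_rpow_one_div_le hαβ (Real.exp_pos _).le hδ0 hQS

/-- RDP-to-approximate-DP conversion (Balle et al. 2019): if `M` is `(α, ρ)`-RDP with
`α > 1`, then for any `0 < δ < 1`, `M` is `(ε, δ)`-DP with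
`ε = ρ + log((α−1)/α) − (log δ + log α)/(α−1)`. -/
theorem RDP_to_DP {D O : Type*} (neighbor : D → D → Prop) (M : D → PMF O)
    (α ρ δ : ℝ) (hα : 1 < α) (hδ0 : 0 < δ) (hδ1 : δ < 1)
    (hM : IsRDP neighbor M α ρ) :
    IsDP neighbor M
      (ρ + Real.log ((α - 1) / α) - (Real.log δ + Real.log α) / (α - 1)) δ :=
  RDP_to_DP_general neighbor M α ρ δ hα hδ0 hM
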